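/- Let x ∈ {0,1}ⁿ, and define x̄ = (1, x₁, x₁, 1, 1, x₂, x₂, 1, …, 1, x_n, x_n, 1) ∈ {0,1,2}^{4n}, and for i ∈ [n] define ȳ_i to be x̄ with its (4(i−1)+3)-th coordinate increased by 1. Then dtw(x̄, ȳ_i) = 0 if x_i = 0, and dtw(x̄, ȳ_i) = 1 if x_i = 1, where dtw uses distance d(a,b)=|a−b| on integers. -/

import Mathlib

/-- `xb` is an expansion of `x`: each letter of `x` is duplicated in place a positive
number of times. -/
def IsExpansion {α : Type*} (x xb : List α) : Prop :=
  ∃ ks : List ℕ, ks.length = x.length ∧ (∀ k ∈ ks, 0 < k) ∧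
    xb = (List.zipWith (fun a k => List.replicate k a) x ks).flatten

/-- `(xb, yb)` is a correspondence between `x` and `y`: a pair of equal-length expansions. -/
def IsCorrespondence {α : Type*} (x y xb yb : List α) : Prop :=
  IsExpansion x xb ∧ IsExpansion y yb ∧ xb.length = yb.length

/-- The cost of a correspondence: summed distances of aligned letters. -/
noncomputable def corrCost {α : Type*} (δ : α → α → ℝ) (xb yb : List α) : ℝ :=
  (List.zipWith δ xb yb).sum

/-- Dynamic time warping distance with respect to a distance function `δ`. -/
noncomputable def dtw {α : Type*} (δ : α → α → ℝ) (x y : List α) : ℝ :=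
  sInf {c | ∃ xb yb, IsCorrespondence x y xb yb ∧ c = corrCost δ xb yb}

/-- Generalized Hamming distance on letters. -/
noncomputable def hamDist {α : Type*} [DecidableEq α] (a b : α) : ℝ := if a = b then 0 else 1

/-- DTW over generalized Hamming space. -/
noncomputable def dtw0 {α : Type*} [DecidableEq α] (x y : List α) : ℝ := dtw hamDist x y

/-- x̄ = (1, x₁, x₁, 1, 1, x₂, x₂, 1, …, 1, x_n, x_n, 1), with bits as integers. -/
def xbar (n : ℕ) (x : Fin n → Bool) : List ℤ :=
  (List.ofFn fun j : Fin n =>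
    [1, if x j then 1 else 0, if x j then 1 else 0, 1]).flatten

/-- ȳ_i equals x̄ except that the letter at position 4(i−1)+3 is x_i + 1. -/
def ybar (n : ℕ) (x : Fin n → Bool) (i : Fin n) : List ℤ :=
  (List.ofFn fun j : Fin n =>
    if j = i then [1, if x j then 1 else 0, (if x j then 1 else 0) + 1, 1]
    else [1, if x j then 1 else 0, if x j then 1 else 0, 1]).flatten

/-!
Every letter of `x̄` is `0` or `1`. If `x_i = 1`, the `i`-th block of `ȳ_i` contains the letter
`2`, which every correspondence must align with some letter of `x̄`, at cost at least `1`; the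
identity alignment attains cost `1`. If `x_i = 0`, the `i`-th blocks `1 0 0 1` and `1 0 1 1`
both expand to `1 0 0 1 1`, so `x̄` and `ȳ_i` have a common expansion and the distance is `0`.
-/

namespace IsExpansion

variable {α : Type*} {x y xb yb : List α}

theorem refl (x : List α) : IsExpansion x x := by
  refine ⟨List.replicate x.length 1, by simp, by simp, ?_⟩
  induction x with
  | nil => rfl
  | cons a x ih => simpa [List.replicate_succ] using ih

theorem mem_iff (h : IsExpansion x xb) {a : α} : a ∈ xb ↔ a ∈ x := by
  obtain ⟨ks, hlen, hpos, rfl⟩ := h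
  induction x generalizing ks with
  | nil => simp
  | cons b x ih =>
    obtain _ | ⟨k, ks⟩ := ks
    · simp at hlen
    · simp only [List.forall_mem_cons] at hpos
      simp [ih ks (by simpa using hlen) hpos.2, hpos.1.ne']

theorem append (hx : IsExpansion x xb) (hy : IsExpansion y yb) :
    IsExpansion (x ++ y) (xb ++ yb) := by
  obtain ⟨ks, hlen, hpos, rfl⟩ := hx
  obtain ⟨ks', hlen', hpos', rfl⟩ := hy
  refine ⟨ks ++ ks', by simp [hlen, hlen'], ?_, ?_⟩
  · simpa only [List.mem_append, or_imp, forall_and] using ⟨hpos, hpos'⟩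
  · rw [List.zipWith_append hlen.symm, List.flatten_append]

theorem flatten_ofFn {n : ℕ} {f g : Fin n → List α} (h : ∀ j, IsExpansion (f j) (g j)) :
    IsExpansion (List.ofFn f).flatten (List.ofFn g).flatten := by
  induction n with
  | zero => exact refl []
  | succ n ih =>
    simp only [List.ofFn_succ, List.flatten_cons]
    exact (h 0).append (ih fun j => h j.succ)

end IsExpansion

section Cost

variable {α : Type*} {δ : α → α → ℝ} {x y xb yb : List α}

theorem nonneg_of_mem_zipWith (hδ : ∀ a b, 0 ≤ δ a b) {c : ℝ} (hc : c ∈ List.zipWith δ xb yb) :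
    0 ≤ c := by
  obtain ⟨k, hk, rfl⟩ := List.mem_iff_getElem.1 hc
  rw [List.getElem_zipWith]
  exact hδ _ _

theorem corrCost_nonneg (hδ : ∀ a b, 0 ≤ δ a b) (xb yb : List α) : 0 ≤ corrCost δ xb yb :=
  List.sum_nonneg fun _ => nonneg_of_mem_zipWith hδ

theorem corrCost_self (hδ : ∀ a, δ a a = 0) (l : List α) : corrCost δ l l = 0 := by
  simp [corrCost, List.zipWith_self, hδ]

theorem corrCost_append {xb' yb' : List α} (h : xb.length = yb.length) :
    corrCost δ (xb ++ xb') (yb ++ yb') = corrCost δ xb yb + corrCost δ xb' yb' := by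
  simp [corrCost, List.zipWith_append h]

theorem corrCost_flatten_ofFn {n : ℕ} {f g : Fin n → List α}
    (h : ∀ j, (f j).length = (g j).length) :
    corrCost δ (List.ofFn f).flatten (List.ofFn g).flatten = ∑ j, corrCost δ (f j) (g j) := by
  induction n with
  | zero => simp [corrCost]
  | succ n ih =>
    simp only [List.ofFn_succ, List.flatten_cons, Fin.sum_univ_succ]
    rw [corrCost_append (h 0), ih fun j => h j.succ]

theorem le_corrCost_of_mem (hδ : ∀ a b, 0 ≤ δ a b) (h : IsCorrespondence x y xb yb)
    {b : α} (hb : b ∈ y) {c : ℝ} (hfar : ∀ a ∈ x, c ≤ δ a b) : c ≤ corrCost δ xb yb := by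
  obtain ⟨hx, hy, hlen⟩ := h
  obtain ⟨k, hk, hbk⟩ := List.mem_iff_getElem.1 (hy.mem_iff.2 hb)
  have hkx : k < xb.length := hlen ▸ hk
  have hkz : k < (List.zipWith δ xb yb).length := by simp [hkx, hk]
  calc c ≤ δ xb[k] b := hfar _ (hx.mem_iff.1 (List.getElem_mem hkx))
    _ = (List.zipWith δ xb yb)[k] := by rw [List.getElem_zipWith, hbk]
    _ ≤ corrCost δ xb yb :=
      List.single_le_sum (fun _ => nonneg_of_mem_zipWith hδ) _ (List.getElem_mem hkz)

end Cost

section Dtw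

variable {α : Type*} {δ : α → α → ℝ} {x y xb yb : List α}

theorem dtw_nonneg (hδ : ∀ a b, 0 ≤ δ a b) : 0 ≤ dtw δ x y :=
  Real.sInf_nonneg fun _ ⟨xb, yb, _, hc⟩ => hc ▸ corrCost_nonneg hδ xb yb

theorem dtw_le_corrCost (hδ : ∀ a b, 0 ≤ δ a b) (h : IsCorrespondence x y xb yb) :
    dtw δ x y ≤ corrCost δ xb yb :=
  csInf_le ⟨0, fun _ ⟨xb, yb, _, hc⟩ => hc ▸ corrCost_nonneg hδ xb yb⟩ ⟨xb, yb, h, rfl⟩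

theorem dtw_eq_zero_of_isExpansion (hδ : ∀ a b, 0 ≤ δ a b) (hδ_self : ∀ a, δ a a = 0)
    {z : List α} (hx : IsExpansion x z) (hy : IsExpansion y z) : dtw δ x y = 0 :=
  le_antisymm ((dtw_le_corrCost hδ ⟨hx, hy, rfl⟩).trans_eq (corrCost_self hδ_self z))
    (dtw_nonneg hδ)

theorem le_dtw_of_mem (hδ : ∀ a b, 0 ≤ δ a b) (h : IsCorrespondence x y xb yb)
    {b : α} (hb : b ∈ y) {c : ℝ} (hfar : ∀ a ∈ x, c ≤ δ a b) : c ≤ dtw δ x y :=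
  le_csInf ⟨_, xb, yb, h, rfl⟩ fun _ ⟨_, _, h', hc⟩ => hc ▸ le_corrCost_of_mem hδ h' hb hfar

end Dtw

section Gadget

variable {n : ℕ} {x : Fin n → Bool} {i : Fin n}

theorem eq_zero_or_eq_one_of_mem_xbar {a : ℤ} (ha : a ∈ xbar n x) : a = 0 ∨ a = 1 := by
  simp only [xbar, List.mem_flatten, List.mem_ofFn] at ha
  obtain ⟨_, ⟨j, rfl⟩, ha⟩ := ha
  simp only [List.mem_cons, List.not_mem_nil, or_false] at ha
  split_ifs at ha <;> omega

theorem two_mem_ybar (hx : x i = true) : (2 : ℤ) ∈ ybar n x i :=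
  List.mem_flatten.2 ⟨_, List.mem_ofFn.2 ⟨i, rfl⟩, by simp [hx]⟩

theorem length_ybar : (ybar n x i).length = (xbar n x).length := by
  simp only [xbar, ybar, List.length_flatten, List.map_ofFn]
  congr 2
  funext j
  simp only [Function.comp_apply]
  split_ifs <;> rfl

theorem corrCost_xbar_ybar : corrCost dist (xbar n x) (ybar n x i) = 1 := by
  rw [xbar, ybar, corrCost_flatten_ofFn fun j => by split_ifs <;> rfl,
    Finset.sum_eq_single i (fun j _ hj => by simpa [hj] using corrCost_self dist_self _)
      (by simp)]
  cases x i <;> norm_num [corrCost, Int.dist_eq]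

theorem exists_isExpansion_xbar_ybar (hx : x i = false) :
    ∃ z, IsExpansion (xbar n x) z ∧ IsExpansion (ybar n x i) z := by
  refine ⟨(List.ofFn fun j => if j = i then [1, 0, 0, 1, 1]
      else [1, if x j then 1 else 0, if x j then 1 else 0, 1]).flatten,
    .flatten_ofFn fun j => ?_, .flatten_ofFn fun j => ?_⟩ <;>
  by_cases hj : j = i <;> simp only [hj, hx, ↓reduceIte]
  · exact ⟨[1, 1, 1, 2], rfl, by decide, rfl⟩
  · exact .refl _
  · exact ⟨[1, 2, 1, 1], rfl, by decide, rfl⟩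
  · exact .refl _

end Gadget

/-- dtw(x̄, ȳ_i) = 0 if x_i = 0 and dtw(x̄, ȳ_i) = 1 if x_i = 1. -/
theorem dtw_linear_sketch_gadget (n : ℕ) (x : Fin n → Bool) (i : Fin n) :
    dtw dist (xbar n x) (ybar n x i) = if x i then 1 else 0 := by
  have hdist : ∀ a b : ℤ, 0 ≤ dist a b := fun _ _ => dist_nonneg
  cases hx : x i
  · obtain ⟨z, hxz, hyz⟩ := exists_isExpansion_xbar_ybar hx
    simpa using dtw_eq_zero_of_isExpansion hdist dist_self hxz hyz
  · have hcorr : IsCorrespondence (xbar n x) (ybar n x i) (xbar n x) (ybar n x i) :=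
      ⟨.refl _, .refl _, length_ybar.symm⟩
    refine le_antisymm ((dtw_le_corrCost hdist hcorr).trans_eq corrCost_xbar_ybar) ?_
    refine le_dtw_of_mem hdist hcorr (two_mem_ybar hx) fun a ha => ?_
    rcases eq_zero_or_eq_one_of_mem_xbar ha with rfl | rfl <;> norm_num [Int.dist_eq]
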